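/- arXiv:2112.02876 — 3 statements merged into one kernel-verified Lean document; each statement's English description precedes it below -/
import Mathlib

section
/- Let μ>0, and let θ, p be C² functions on (0,1) with θ > 0 solving −μθ'' = θ(m−θ) and −μp'' − (m−2θ)p = 1. Then the Hamiltonian quantity H(x) := μ p'(x)θ'(x) + p(x)θ(x)(m(x)−θ(x)) + θ(x) − c·m(x) has derivative zero wherever m is locally constant; in particular, if m is constant on an open subinterval (a,b) ⊂ (0,1), then H is constant on (a,b). -/
private lemma deriv_contDiff_of_two {f : ℝ → ℝ} (hf : ContDiff ℝ 2 f) :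
    ContDiff ℝ 1 (deriv f) := by
  have : (2 : WithTop ℕ∞) = 1 + 1 := by norm_num
  rw [this, contDiff_succ_iff_deriv] at hf
  exact hf.2.2

private lemma const_of_hasDerivAt_zero {f : ℝ → ℝ} {s : Set ℝ} (hs : Convex ℝ s)
    (ho : IsOpen s) (h : ∀ x ∈ s, HasDerivAt f 0 x) :
    ∀ x ∈ s, ∀ y ∈ s, f x = f y := by
  intro x hx y hy
  refine hs.is_const_of_fderivWithin_eq_zero
    (fun z hz => ((h z hz).differentiableAt).differentiableWithinAt) (fun z hz => ?_) hx hy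
  rw [fderivWithin_of_isOpen ho hz, (h z hz).hasFDerivAt.fderiv]
  ext; simp

/-- The Hamiltonian `H = μ p' θ' + p θ (m - θ) + θ - c m` is constant on any open
subinterval where the control `m` is constant. -/
theorem stmt_4 (μ c a b m₀ : ℝ) (hμ : 0 < μ) (hab : a < b)
    (hsub : Set.Ioo a b ⊆ Set.Ioo (0:ℝ) 1)
    (m θ p : ℝ → ℝ)
    (hθC2 : ContDiff ℝ 2 θ) (hpC2 : ContDiff ℝ 2 p)
    (hθpos : ∀ x ∈ Set.Ioo (0:ℝ) 1, 0 < θ x)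
    (hodeθ : ∀ x ∈ Set.Ioo (0:ℝ) 1, -μ * deriv (deriv θ) x = θ x * (m x - θ x))
    (hodep : ∀ x ∈ Set.Ioo (0:ℝ) 1, -μ * deriv (deriv p) x - (m x - 2 * θ x) * p x = 1)
    (hmconst : ∀ x ∈ Set.Ioo a b, m x = m₀) :
    ∀ x ∈ Set.Ioo a b, ∀ y ∈ Set.Ioo a b,
      μ * deriv p x * deriv θ x + p x * θ x * (m x - θ x) + θ x - c * m x
        = μ * deriv p y * deriv θ y + p y * θ y * (m y - θ y) + θ y - c * m y := by
  have hdθ : ContDiff ℝ 1 (deriv θ) := deriv_contDiff_of_two hθC2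
  have hdp : ContDiff ℝ 1 (deriv p) := deriv_contDiff_of_two hpC2
  set G : ℝ → ℝ := fun x =>
    μ * (deriv p x * deriv θ x) + p x * θ x * (m₀ - θ x) + θ x - c * m₀ with hG
  have key : ∀ x ∈ Set.Ioo a b, HasDerivAt G 0 x := by
    intro x hx
    have hx01 := hsub hx
    have hpθ : HasDerivAt θ (deriv θ x) x :=
      ((hθC2.differentiable (by norm_num)) x).hasDerivAt
    have hpp : HasDerivAt p (deriv p x) x :=
      ((hpC2.differentiable (by norm_num)) x).hasDerivAt
    have hθ'' : HasDerivAt (deriv θ) (deriv (deriv θ) x) x :=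
      ((hdθ.differentiable one_ne_zero) x).hasDerivAt
    have hp'' : HasDerivAt (deriv p) (deriv (deriv p) x) x :=
      ((hdp.differentiable one_ne_zero) x).hasDerivAt
    have hA : -μ * deriv (deriv θ) x = θ x * (m₀ - θ x) := by
      rw [← hmconst x hx]; exact hodeθ x hx01
    have hB : -μ * deriv (deriv p) x - (m₀ - 2 * θ x) * p x = 1 := by
      rw [← hmconst x hx]; exact hodep x hx01
    have hD : HasDerivAt G
        (μ * ((deriv (deriv p) x) * deriv θ x + deriv p x * (deriv (deriv θ) x))
          + ((deriv p x * θ x + p x * deriv θ x) * (m₀ - θ x)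
              + p x * θ x * (0 - deriv θ x)) + deriv θ x - 0) x := by
      exact ((((hp''.mul hθ'').const_mul μ).add
        (((hpp.mul hpθ).mul ((hasDerivAt_const x m₀).sub hpθ)))).add hpθ).sub
        (hasDerivAt_const x (c * m₀))
    convert hD using 1
    have h1 : μ * deriv (deriv θ) x = -(θ x * (m₀ - θ x)) := by linarith
    have h2 : μ * deriv (deriv p) x = -((m₀ - 2 * θ x) * p x) - 1 := by linarith
    linear_combination (-(deriv θ x)) * h2 + (-(deriv p x)) * h1
  have hconst := const_of_hasDerivAt_zero (convex_Ioo a b) isOpen_Ioo key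
  intro x hx y hy
  have := hconst x hx y hy
  rw [hmconst x hx, hmconst y hy]
  simp only [hG] at this
  linarith [this]
end

section
/- Let c > 1, μ > 0, and let θ, p be C² positive functions on [0,1] satisfying −μθ'' = θ(m−θ), −μp'' − (m−2θ)p = 1, with the Hamiltonian μp'θ' + pθ(m−θ) + θ − cm constant on (0,1). Suppose a < y₀ in [0,1], θ'(a) = 0, θ' > 0 on (a, y₀], p(a)θ(a) < c, p(y₀)θ(y₀) = c, and m(a)=0, m(y₀)=κ with p(y₀)θ(y₀)=c. Then p'(y₀) > 0. -/
/-- The key sign argument: from the Hamiltonian identity between `a` and `y₀`,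
with `θ'(a)=0`, `Φ(a) < c`, `Φ(y₀) = c`, `m(a)=0`, `m(y₀)=κ`, `θ' > 0` on `(a,y₀]`
and `c > 1`, one deduces `p'(y₀) > 0`. -/
theorem stmt_10 (μ c κ a y₀ : ℝ) (hμ : 0 < μ) (hc : 1 < c)
    (ha : a ∈ Set.Icc (0:ℝ) 1) (hy₀ : y₀ ∈ Set.Icc (0:ℝ) 1) (hay : a < y₀)
    (m θ p : ℝ → ℝ)
    (hθC2 : ContDiff ℝ 2 θ) (hpC2 : ContDiff ℝ 2 p)
    (hθpos : ∀ x ∈ Set.Icc (0:ℝ) 1, 0 < θ x)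
    (hppos : ∀ x ∈ Set.Icc (0:ℝ) 1, 0 < p x)
    (hodeθ : ∀ x ∈ Set.Ioo (0:ℝ) 1, -μ * deriv (deriv θ) x = θ x * (m x - θ x))
    (hodep : ∀ x ∈ Set.Ioo (0:ℝ) 1, -μ * deriv (deriv p) x - (m x - 2 * θ x) * p x = 1)
    (hH : μ * deriv p a * deriv θ a + p a * θ a * (m a - θ a) + θ a - c * m a
        = μ * deriv p y₀ * deriv θ y₀ + p y₀ * θ y₀ * (m y₀ - θ y₀) + θ y₀ - c * m y₀)
    (hθ'a : deriv θ a = 0)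
    (hθ'pos : ∀ x ∈ Set.Ioc a y₀, 0 < deriv θ x)
    (hΦa : p a * θ a < c) (hΦy₀ : p y₀ * θ y₀ = c)
    (hma : m a = 0) (hmy₀ : m y₀ = κ) :
    0 < deriv p y₀ := by
  have hθa : 0 < θ a := hθpos a ha
  have hmono : StrictMonoOn θ (Set.Icc a y₀) := by
    apply strictMonoOn_of_deriv_pos (convex_Icc a y₀)
      (hθC2.continuous.continuousOn)
    intro x hx
    rw [interior_Icc] at hx
    exact hθ'pos x ⟨hx.1, le_of_lt hx.2⟩
  have hθlt : θ a < θ y₀ :=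
    hmono ⟨le_refl a, le_of_lt hay⟩ ⟨le_of_lt hay, le_refl y₀⟩ hay
  have hθ'y : 0 < deriv θ y₀ := hθ'pos y₀ ⟨hay, le_refl y₀⟩
  have hkey : μ * deriv p y₀ * deriv θ y₀
      = θ a * (1 - p a * θ a) + (c - 1) * θ y₀ := by
    rw [hθ'a, hma, hmy₀] at hH
    linear_combination -1 * hH + (θ y₀ - κ) * hΦy₀
  have hpos : 0 < μ * deriv p y₀ * deriv θ y₀ := by
    rw [hkey]
    nlinarith [hθa, hθlt, hΦa, hc]
  by_contra h
  push_neg at h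
  have h3 : deriv p y₀ * deriv θ y₀ ≤ 0 :=
    mul_nonpos_of_nonpos_of_nonneg h hθ'y.le
  nlinarith [mul_nonneg hμ.le (neg_nonneg.2 h3)]
end

section
/- Let μ>0, κ>0, m measurable with 0 ≤ m ≤ κ, and θ a C² solution of −μθ'' = θ(m−θ) on (0,1), θ'(0)=θ'(1)=0, with 0 < θ ≤ κ. Assume the Poincaré–Wirtinger type inequality ‖θ − ∫₀¹θ‖_{L^∞} ≤ C·(∫₀¹(θ')²)^{1/2} and that ∫₀¹θ ≥ ∫₀¹m. Then 0 ≤ ∫₀¹(θ − m) ≤ 3C·κ^{3/2}/√μ. -/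
open MeasureTheory intervalIntegral Set

lemma aux_int (f : ℝ → ℝ) (hf : Measurable f) (K : ℝ)
    (hb : ∀ x ∈ Set.Icc (0:ℝ) 1, |f x| ≤ K) : IntervalIntegrable f volume 0 1 := by
  rw [intervalIntegrable_iff, Set.uIoc_of_le (by norm_num : (0:ℝ) ≤ 1)]
  refine (integrable_const K).mono' hf.aestronglyMeasurable ?_
  rw [ae_restrict_iff' measurableSet_Ioc]
  refine ae_of_all _ fun x hx => ?_
  simpa using hb x ⟨le_of_lt hx.1, hx.2⟩


/-- Quantitative estimate: `0 ≤ ∫₀¹(θ - m) ≤ 3 C κ^{3/2} / √μ` under the Poincaré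
inequality hypothesis. -/
theorem stmt_15 (μ κ C : ℝ) (hμ : 0 < μ) (hκ : 0 < κ) (hC : 0 < C) (m θ : ℝ → ℝ)
    (hmMeas : Measurable m)
    (hm : ∀ x ∈ Set.Icc (0:ℝ) 1, 0 ≤ m x ∧ m x ≤ κ)
    (hθC2 : ContDiff ℝ 2 θ)
    (hθpos : ∀ x ∈ Set.Icc (0:ℝ) 1, 0 < θ x ∧ θ x ≤ κ)
    (hode : ∀ x ∈ Set.Ioo (0:ℝ) 1, -μ * deriv (deriv θ) x = θ x * (m x - θ x))
    (hb0 : deriv θ 0 = 0) (hb1 : deriv θ 1 = 0)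
    (hpoincare : ∀ x ∈ Set.Icc (0:ℝ) 1,
      |θ x - ∫ t in (0:ℝ)..1, θ t| ≤ C * Real.sqrt (∫ t in (0:ℝ)..1, (deriv θ t) ^ 2))
    (hmean : (∫ x in (0:ℝ)..1, m x) ≤ ∫ x in (0:ℝ)..1, θ x) :
    0 ≤ (∫ x in (0:ℝ)..1, (θ x - m x)) ∧
    (∫ x in (0:ℝ)..1, (θ x - m x)) ≤ 3 * C * Real.sqrt (κ ^ 3) / Real.sqrt μ := by
  have h01 : (0:ℝ) ≤ 1 := by norm_num
  -- smoothness
  have hθc : Continuous θ := hθC2.continuous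
  have hθd : Differentiable ℝ θ := hθC2.differentiable two_ne_zero
  have hθ'C1 : ContDiff ℝ 1 (deriv θ) :=
    (contDiff_succ_iff_deriv.mp (by exact_mod_cast hθC2 : ContDiff ℝ (1+1) θ)).2.2
  have hθ'c : Continuous (deriv θ) := hθ'C1.continuous
  have hθ'd : Differentiable ℝ (deriv θ) := hθ'C1.differentiable one_ne_zero
  have hθ''c : Continuous (deriv (deriv θ)) :=
    ((contDiff_succ_iff_deriv.mp
      (by exact_mod_cast hθ'C1 : ContDiff ℝ (0+1) (deriv θ))).2.2).continuous
  -- integrability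
  have intθ : IntervalIntegrable θ volume 0 1 := hθc.intervalIntegrable 0 1
  have intm : IntervalIntegrable m volume 0 1 := by
    refine aux_int m hmMeas κ fun x hx => ?_
    rcases hm x hx with ⟨h1, h2⟩; rw [abs_of_nonneg h1]; exact h2
  have intθsq : IntervalIntegrable (fun x => θ x ^ 2) volume 0 1 :=
    (hθc.pow 2).intervalIntegrable 0 1
  have intθ'sq : IntervalIntegrable (fun x => (deriv θ x) ^ 2) volume 0 1 :=
    (hθ'c.pow 2).intervalIntegrable 0 1
  have intθ'' : IntervalIntegrable (deriv (deriv θ)) volume 0 1 := hθ''c.intervalIntegrable 0 1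
  have intθm : IntervalIntegrable (fun x => θ x * m x) volume 0 1 := by
    refine aux_int _ (hθc.measurable.mul hmMeas) (κ * κ) fun x hx => ?_
    rcases hm x hx with ⟨h1, h2⟩; rcases hθpos x hx with ⟨h3, h4⟩
    rw [abs_mul, abs_of_pos h3, abs_of_nonneg h1]
    exact mul_le_mul h4 h2 h1 (le_of_lt hκ)
  have intode : IntervalIntegrable (fun x => θ x * (m x - θ x)) volume 0 1 := by
    refine aux_int _ (hθc.measurable.mul (hmMeas.sub hθc.measurable)) (κ * κ) fun x hx => ?_
    rcases hm x hx with ⟨h1, h2⟩; rcases hθpos x hx with ⟨h3, h4⟩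
    rw [abs_mul, abs_of_pos h3]
    have : |m x - θ x| ≤ κ := by rw [abs_le]; constructor <;> nlinarith
    exact mul_le_mul h4 this (abs_nonneg _) (le_of_lt hκ)
  have intode2 : IntervalIntegrable (fun x => θ x * (θ x * (m x - θ x))) volume 0 1 := by
    refine aux_int _ (hθc.measurable.mul (hθc.measurable.mul (hmMeas.sub hθc.measurable)))
      (κ * (κ * κ)) fun x hx => ?_
    rcases hm x hx with ⟨h1, h2⟩; rcases hθpos x hx with ⟨h3, h4⟩
    have h5 : |m x - θ x| ≤ κ := by rw [abs_le]; constructor <;> nlinarith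
    rw [abs_mul, abs_mul, abs_of_pos h3]
    have t1 : θ x * |m x - θ x| ≤ κ * κ := mul_le_mul h4 h5 (abs_nonneg _) hκ.le
    exact mul_le_mul h4 t1 (mul_nonneg h3.le (abs_nonneg _)) hκ.le
  -- a.e. validity of the ODE on the interval
  have haene : ∀ᵐ x : ℝ, x ≠ 1 := by
    rw [MeasureTheory.ae_iff]
    simpa using measure_singleton (1:ℝ)
  have hae : ∀ᵐ x : ℝ, x ∈ Set.uIoc (0:ℝ) 1 → -μ * deriv (deriv θ) x = θ x * (m x - θ x) := by
    filter_upwards [haene] with x hx1 hx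
    rw [Set.uIoc_of_le h01] at hx
    exact hode x ⟨hx.1, lt_of_le_of_ne hx.2 hx1⟩
  -- Step 1: ∫ θ(m-θ) = 0, hence ∫ θ m = ∫ θ²
  have hint_ode : (∫ x in (0:ℝ)..1, θ x * (m x - θ x)) = 0 := by
    have e1 : (∫ x in (0:ℝ)..1, -μ * deriv (deriv θ) x)
        = ∫ x in (0:ℝ)..1, θ x * (m x - θ x) := intervalIntegral.integral_congr_ae hae
    have e2 : (∫ x in (0:ℝ)..1, deriv (deriv θ) x) = deriv θ 1 - deriv θ 0 :=
      intervalIntegral.integral_deriv_eq_sub (fun x _ => (hθ'd x)) intθ''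
    rw [intervalIntegral.integral_const_mul, e2, hb0, hb1] at e1
    simpa using e1.symm
  have hθm_eq : (∫ x in (0:ℝ)..1, θ x * m x) = ∫ x in (0:ℝ)..1, θ x ^ 2 := by
    have e : (∫ x in (0:ℝ)..1, θ x * (m x - θ x))
        = (∫ x in (0:ℝ)..1, θ x * m x) - ∫ x in (0:ℝ)..1, θ x ^ 2 := by
      rw [← intervalIntegral.integral_sub intθm intθsq]
      exact intervalIntegral.integral_congr fun x _ => by ring
    rw [hint_ode] at e; linarith
  -- Step 2: integration by parts
  have hibp : (∫ x in (0:ℝ)..1, θ x * deriv (deriv θ) x)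
      = - ∫ x in (0:ℝ)..1, (deriv θ x) ^ 2 := by
    have h := intervalIntegral.integral_mul_deriv_eq_deriv_mul
      (u := θ) (u' := deriv θ) (v := deriv θ) (v' := deriv (deriv θ))
      (fun x _ => (hθd x).hasDerivAt) (fun x _ => (hθ'd x).hasDerivAt)
      (hθ'c.intervalIntegrable 0 1) intθ''
    rw [hb0, hb1] at h
    have e : (∫ x in (0:ℝ)..1, deriv θ x * deriv θ x) = ∫ x in (0:ℝ)..1, (deriv θ x) ^ 2 :=
      intervalIntegral.integral_congr fun x _ => (sq (deriv θ x)).symm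
    rw [e] at h
    rw [h]; ring
  -- Step 3: energy estimate μ ∫ (θ')² ≤ κ³
  have henergy : μ * (∫ x in (0:ℝ)..1, (deriv θ x) ^ 2) ≤ κ ^ 3 := by
    have e3 : (∫ x in (0:ℝ)..1, θ x * (-μ * deriv (deriv θ) x))
        = ∫ x in (0:ℝ)..1, θ x * (θ x * (m x - θ x)) := by
      apply intervalIntegral.integral_congr_ae
      filter_upwards [hae] with x hx1 hx
      rw [hx1 hx]
    have e4 : (∫ x in (0:ℝ)..1, θ x * (-μ * deriv (deriv θ) x))
        = -μ * ∫ x in (0:ℝ)..1, θ x * deriv (deriv θ) x := by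
      rw [← intervalIntegral.integral_const_mul]
      exact intervalIntegral.integral_congr fun x _ => by ring
    have e5 : (∫ x in (0:ℝ)..1, θ x * (θ x * (m x - θ x))) ≤ κ ^ 3 := by
      have := intervalIntegral.integral_mono_on h01 intode2
        (_root_.intervalIntegrable_const (c := κ ^ 3)) (fun x hx => by
          rcases hm x hx with ⟨h1, h2⟩; rcases hθpos x hx with ⟨h3, h4⟩
          have t1 : θ x * θ x ≤ κ * κ := mul_le_mul h4 h4 h3.le hκ.le
          have t2 : θ x * θ x * m x ≤ κ * κ * κ :=
            mul_le_mul t1 h2 h1 (by positivity)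
          nlinarith [mul_pos h3 (mul_pos h3 h3)])
      simpa using this
    rw [e4, hibp] at e3
    nlinarith [e3, e5]
  -- Step 4: Cauchy–Schwarz  I² ≤ ∫ θ²
  set I : ℝ := ∫ x in (0:ℝ)..1, θ x with hI
  have hCS2 : I ^ 2 ≤ ∫ x in (0:ℝ)..1, θ x ^ 2 := by
    have h0 : 0 ≤ ∫ x in (0:ℝ)..1, (θ x - I) ^ 2 :=
      intervalIntegral.integral_nonneg h01 (fun x _ => sq_nonneg _)
    have e : (∫ x in (0:ℝ)..1, (θ x - I) ^ 2)
        = (∫ x in (0:ℝ)..1, θ x ^ 2) - I ^ 2 := by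
      have e1 : (∫ x in (0:ℝ)..1, (θ x - I) ^ 2)
          = ∫ x in (0:ℝ)..1, (θ x ^ 2 - (2 * I) * θ x + I ^ 2) :=
        intervalIntegral.integral_congr fun x _ => by ring
      rw [e1, intervalIntegral.integral_add (intθsq.sub (intθ.const_mul _))
        (intervalIntegrable_const), intervalIntegral.integral_sub intθsq (intθ.const_mul _),
        intervalIntegral.integral_const_mul]
      simp [← hI]
      ring
    linarith
  -- Step 5: pointwise upper bound from Poincaré
  set S : ℝ := Real.sqrt (∫ t in (0:ℝ)..1, (deriv θ t) ^ 2) with hS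
  have hSnn : 0 ≤ S := Real.sqrt_nonneg _
  have hup : ∀ x ∈ Set.Icc (0:ℝ) 1, θ x ≤ I + C * S := fun x hx => by
    have := hpoincare x hx; rw [abs_le] at this; linarith [this.2]
  have hm2 : (∫ x in (0:ℝ)..1, θ x * m x) ≤ (I + C * S) * ∫ x in (0:ℝ)..1, m x := by
    have := intervalIntegral.integral_mono_on h01 intθm (intm.const_mul (I + C * S))
      (fun x hx => mul_le_mul_of_nonneg_right (hup x hx) (hm x hx).1)
    rwa [intervalIntegral.integral_const_mul] at this
  -- Step 6: positivity of I
  have hIpos : 0 < I := by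
    refine intervalIntegral.intervalIntegral_pos_of_pos_on intθ ?_ one_pos
    exact fun x hx => (hθpos x ⟨le_of_lt hx.1, le_of_lt hx.2⟩).1
  -- Step 7: conclude
  have hBdef : (∫ x in (0:ℝ)..1, (θ x - m x)) = I - ∫ x in (0:ℝ)..1, m x :=
    intervalIntegral.integral_sub intθ intm
  set J : ℝ := ∫ x in (0:ℝ)..1, m x with hJ
  have hB0 : 0 ≤ I - J := by linarith
  have hkey : I ^ 2 ≤ (I + C * S) * J := by
    calc I ^ 2 ≤ ∫ x in (0:ℝ)..1, θ x ^ 2 := hCS2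
    _ = ∫ x in (0:ℝ)..1, θ x * m x := hθm_eq.symm
    _ ≤ (I + C * S) * J := hm2
  have hCSnn : 0 ≤ C * S := mul_nonneg hC.le hSnn
  have hBle : I - J ≤ C * S := by nlinarith [hkey, hB0, hCSnn, hIpos]
  have hS2 : S ≤ Real.sqrt (κ ^ 3) / Real.sqrt μ := by
    have h1 : (∫ t in (0:ℝ)..1, (deriv θ t) ^ 2) ≤ κ ^ 3 / μ := by
      rw [le_div_iff₀ hμ]; nlinarith [henergy]
    calc S ≤ Real.sqrt (κ ^ 3 / μ) := Real.sqrt_le_sqrt h1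
    _ = Real.sqrt (κ ^ 3) / Real.sqrt μ := Real.sqrt_div (by positivity) μ
  constructor
  · rw [hBdef]; linarith
  · rw [hBdef]
    have hq : 0 ≤ Real.sqrt (κ ^ 3) / Real.sqrt μ := by positivity
    calc I - J ≤ C * S := hBle
    _ ≤ C * (Real.sqrt (κ ^ 3) / Real.sqrt μ) := by nlinarith
    _ ≤ 3 * C * Real.sqrt (κ ^ 3) / Real.sqrt μ := by
        rw [mul_div_assoc]; nlinarith
end
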